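/- The cumulative density function of the area ratio is properly normalized at the endpoints: as c → 0 from the right, c − (3c − 1/2)·ln c + (1 − 4c)^{3/2}·artanh(√(1 − 4c)) tends to 0, and at c = 1 the expression c − (3c − 1/2)·ln c + (4c − 1)^{3/2}·(arctan(√(4c − 1)) − π/3) equals 1. -/

import Mathlib

/-
With `s = √(1 - 4c)` one has `(1 - s)(1 + s) = 4c`, so `artanh s = log ((1 + s) / 2) - (log c) / 2`.
Substituting, the `log c` terms without a factor `c` add up to `(1 - s³) (log c) / 2`, and
`1 - s³ = 4c (1 + s + s²) / (1 + s)` turns this into `c log c` times a continuous function of `s`.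
So on `(0, 1/4]` the left branch agrees with a function continuous on all of `ℝ` that vanishes at `0`.
-/

open Real Filter

noncomputable def artanh (a : ℝ) : ℝ := (1 / 2) * Real.log ((1 + a) / (1 - a))

lemma artanh_eq_log_one_add_sub_half_log {s : ℝ} (hs : s ∈ Set.Ioo (-1) 1) :
    _root_.artanh s = log (1 + s) - log (1 - s ^ 2) / 2 := by
  obtain ⟨hs₁, hs₂⟩ := hs
  have h1 : 1 - s ^ 2 = (1 + s) * (1 - s) := by ring
  rw [_root_.artanh, h1, log_div (by linarith) (by linarith),
    log_mul (by linarith) (by linarith)]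
  ring

lemma artanh_sqrt_one_sub_four_mul {c : ℝ} (hc : 0 < c) (hc' : c ≤ 1 / 4) :
    _root_.artanh √(1 - 4 * c) = log ((1 + √(1 - 4 * c)) / 2) - log c / 2 := by
  have hsq : √(1 - 4 * c) ^ 2 = 1 - 4 * c := sq_sqrt (by linarith)
  have hs₀ : 0 ≤ √(1 - 4 * c) := sqrt_nonneg _
  have hs₁ : √(1 - 4 * c) < 1 := by nlinarith
  rw [artanh_eq_log_one_add_sub_half_log ⟨by linarith, hs₁⟩, hsq,
    log_div (by linarith) two_ne_zero, show 1 - (1 - 4 * c) = 2 ^ 2 * c by ring,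
    log_mul (by positivity) hc.ne', log_pow]
  push_cast
  ring

lemma cdf_left_branch_eq {c : ℝ} (hc : 0 < c) (hc' : c ≤ 1 / 4) :
    c - (3 * c - 1 / 2) * log c + (1 - 4 * c) ^ ((3 : ℝ) / 2) * _root_.artanh √(1 - 4 * c) =
      c - c * log c * ((1 - √(1 - 4 * c)) * (1 + 2 * √(1 - 4 * c)) / (1 + √(1 - 4 * c))) +
        √(1 - 4 * c) ^ 3 * log ((1 + √(1 - 4 * c)) / 2) := by
  have hpow : (1 - 4 * c) ^ ((3 : ℝ) / 2) = √(1 - 4 * c) ^ 3 := by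
    rw [sqrt_eq_rpow, ← rpow_natCast, ← rpow_mul (by linarith)]
    norm_num
  rw [hpow, artanh_sqrt_one_sub_four_mul hc hc']
  set s := √(1 - 4 * c)
  have hsq : s ^ 2 = 1 - 4 * c := sq_sqrt (by linarith)
  have hs₀ : 0 ≤ s := sqrt_nonneg _
  field_simp
  linear_combination -(1 + s + s ^ 2) * log c * hsq

lemma continuous_cdf_left_branch_rhs : Continuous fun c : ℝ =>
    c - c * log c * ((1 - √(1 - 4 * c)) * (1 + 2 * √(1 - 4 * c)) / (1 + √(1 - 4 * c))) +
      √(1 - 4 * c) ^ 3 * log ((1 + √(1 - 4 * c)) / 2) := by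
  have hpos : ∀ c : ℝ, 0 < 1 + √(1 - 4 * c) := fun c => by positivity
  refine continuous_id.sub (continuous_mul_log.mul ?_) |>.add ?_
  · exact Continuous.div (by fun_prop) (by fun_prop) fun c => (hpos c).ne'
  · exact (by fun_prop : Continuous _).mul
      (Continuous.log (by fun_prop) fun c => (half_pos (hpos c)).ne')

/-- The CDF of the area ratio is properly normalized: the left branch tends to `0`
as `c → 0⁺`, and the right branch equals `1` at `c = 1`. -/
theorem cdf_normalized :
    Tendsto (fun c : ℝ => c - (3 * c - 1 / 2) * Real.log c +
        (1 - 4 * c) ^ ((3 : ℝ) / 2) * _root_.artanh (Real.sqrt (1 - 4 * c)))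
      (nhdsWithin 0 (Set.Ioi 0)) (nhds 0) ∧
    (1 : ℝ) - (3 * 1 - 1 / 2) * Real.log 1 +
        (4 * 1 - 1) ^ ((3 : ℝ) / 2) * (Real.arctan (Real.sqrt (4 * 1 - 1)) - π / 3) = 1 := by
  refine ⟨?_, by norm_num [arctan_sqrt_three]⟩
  have hlim := continuous_cdf_left_branch_rhs.tendsto 0
  norm_num at hlim
  refine (hlim.mono_left nhdsWithin_le_nhds).congr' ?_
  filter_upwards [Ioc_mem_nhdsGT (by norm_num : (0 : ℝ) < 1 / 4)] with c hc
  exact (cdf_left_branch_eq hc.1 hc.2).symm
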